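/- arXiv:2002.04010 — 2 statements merged into one kernel-verified Lean document; each statement's English description precedes it below -/
import Mathlib

section
/- Jacobian-difference bound on a Frobenius ball (boundedness part of Lemma A.2(a)): Assume σ is k-times continuously differentiable with σ^{(k)} L-Lipschitz, and ‖x_i‖ = 1 for all i. Then for every C₀ > 0 and every W ∈ (ℝ^d)^m with ‖W − W₀‖_F ≤ C₀, one has ‖J(W) − J^{(k)}(W)‖_F ≤ (L √n / k!) · C₀^k · m^{−1/2}. -/
open scoped BigOperators RealInnerProductSpace
noncomputable section

/-- Weight space: `m` neurons, each in `ℝ^d`, with the Frobenius (ℓ²-of-ℓ²) norm. -/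
abbrev Wts (d m : ℕ) : Type := PiLp 2 (fun _ : Fin m => EuclideanSpace ℝ (Fin d))

/-- Two-layer network `f_W(x) = m^{-1/2} ∑_r a_r σ(⟨w_r, x⟩)`. -/
def net (d m : ℕ) (σ : ℝ → ℝ) (a : Fin m → ℝ) (W : Wts d m)
    (x : EuclideanSpace ℝ (Fin d)) : ℝ :=
  (Real.sqrt m)⁻¹ * ∑ r : Fin m, a r * σ ⟪W r, x⟫

/-- The `k`-th order Taylorized model of the network around `W₀`. -/
def netT (d m k : ℕ) (σ : ℝ → ℝ) (a : Fin m → ℝ) (W₀ : Wts d m) (W : Wts d m)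
    (x : EuclideanSpace ℝ (Fin d)) : ℝ :=
  (Real.sqrt m)⁻¹ * ∑ r : Fin m, a r *
    ∑ j ∈ Finset.range (k + 1),
      (iteratedDeriv j σ ⟪W₀ r, x⟫ / (j.factorial : ℝ)) * ⟪W r - W₀ r, x⟫ ^ j

/-- Residual vector `g(W) ∈ ℝⁿ`, `g(W)ᵢ = f_W(xᵢ) - yᵢ`. -/
def resid (d m n : ℕ) (σ : ℝ → ℝ) (a : Fin m → ℝ)
    (X : Fin n → EuclideanSpace ℝ (Fin d)) (y : EuclideanSpace ℝ (Fin n))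
    (W : Wts d m) : EuclideanSpace ℝ (Fin n) :=
  WithLp.toLp 2 (fun i => net d m σ a W (X i) - y i)

/-- Residual vector `g⁽ᵏ⁾(W) ∈ ℝⁿ` of the Taylorized model. -/
def residT (d m n k : ℕ) (σ : ℝ → ℝ) (a : Fin m → ℝ) (W₀ : Wts d m)
    (X : Fin n → EuclideanSpace ℝ (Fin d)) (y : EuclideanSpace ℝ (Fin n))
    (W : Wts d m) : EuclideanSpace ℝ (Fin n) :=
  WithLp.toLp 2 (fun i => netT d m k σ a W₀ W (X i) - y i)

/-- Squared loss `L(W) = ½‖g(W)‖²`. -/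
def loss (d m n : ℕ) (σ : ℝ → ℝ) (a : Fin m → ℝ)
    (X : Fin n → EuclideanSpace ℝ (Fin d)) (y : EuclideanSpace ℝ (Fin n))
    (W : Wts d m) : ℝ :=
  (1 / 2) * ‖resid d m n σ a X y W‖ ^ 2

/-- Squared loss `L⁽ᵏ⁾(W) = ½‖g⁽ᵏ⁾(W)‖²` of the Taylorized model. -/
def lossT (d m n k : ℕ) (σ : ℝ → ℝ) (a : Fin m → ℝ) (W₀ : Wts d m)
    (X : Fin n → EuclideanSpace ℝ (Fin d)) (y : EuclideanSpace ℝ (Fin n))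
    (W : Wts d m) : ℝ :=
  (1 / 2) * ‖residT d m n k σ a W₀ X y W‖ ^ 2

/-- `i`-th row of the Jacobian `J(W)`: the gradient of `W ↦ f_W(xᵢ)`.
Its `r`-th block `Jrow ... W i r` is the gradient `∇_{w_r} f_W(xᵢ)`. -/
def Jrow (d m n : ℕ) (σ : ℝ → ℝ) (a : Fin m → ℝ)
    (X : Fin n → EuclideanSpace ℝ (Fin d)) (W : Wts d m) (i : Fin n) : Wts d m :=
  gradient (fun V => net d m σ a V (X i)) W

/-- `i`-th row of the Taylorized Jacobian `J⁽ᵏ⁾(W)`. -/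
def JrowT (d m n k : ℕ) (σ : ℝ → ℝ) (a : Fin m → ℝ) (W₀ : Wts d m)
    (X : Fin n → EuclideanSpace ℝ (Fin d)) (W : Wts d m) (i : Fin n) : Wts d m :=
  gradient (fun V => netT d m k σ a W₀ V (X i)) W

/-! The two Jacobians differ neuron by neuron only in the scalar factor multiplying `xᵢ`: the
`r`-th block of `J(W)ᵢ - J⁽ᵏ⁾(W)ᵢ` is `m^{-1/2} a_r (σ'(b + δ) - P(δ)) xᵢ`, where
`b = ⟨w_{r,0}, xᵢ⟩`, `δ = ⟨w_r - w_{r,0}, xᵢ⟩` and `P` is the Taylor polynomial of order `k - 1`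
of `σ'` at `b`. As the `(k - 1)`-th derivative of `σ'` is `L`-Lipschitz, the Taylor remainder is at
most `L |δ|^k / k!`, and `|δ| ≤ ‖w_r - w_{r,0}‖` because `‖xᵢ‖ = 1`. Summing squares over neurons
uses `∑_r ‖w_r - w_{r,0}‖^{2k} ≤ ‖W - W₀‖^{2k}`, and summing over the `n` rows gives `√n`. -/

open Finset
open scoped Nat

lemma abs_le_of_abs_deriv_le_pow_of_nonneg {h h' : ℝ → ℝ} {C : ℝ} {p : ℕ} (h0 : h 0 = 0)
    (hd : ∀ u, HasDerivAt h (h' u) u) (hb : ∀ u, |h' u| ≤ C * |u| ^ p) {δ : ℝ} (hδ : 0 ≤ δ) :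
    |h δ| ≤ C * δ ^ (p + 1) / (p + 1) := by
  have hB : ∀ u : ℝ, HasDerivAt (fun u => C * u ^ (p + 1) / (p + 1)) (C * u ^ p) u := by
    intro u
    refine (((hasDerivAt_pow (p + 1) u).const_mul C).div_const ((p : ℝ) + 1)).congr_deriv ?_
    rw [Nat.add_sub_cancel]
    push_cast
    field_simp
  refine image_norm_le_of_norm_deriv_right_le_deriv_boundary (f := h)
    (fun u _ => (hd u).continuousAt.continuousWithinAt) (fun u _ => (hd u).hasDerivWithinAt)
    (by simp [h0]) hB (fun u hu => ?_) ⟨hδ, le_rfl⟩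
  simpa [abs_of_nonneg hu.1] using hb u

lemma abs_le_of_abs_deriv_le_pow {h h' : ℝ → ℝ} {C : ℝ} {p : ℕ} (h0 : h 0 = 0)
    (hd : ∀ u, HasDerivAt h (h' u) u) (hb : ∀ u, |h' u| ≤ C * |u| ^ p) (δ : ℝ) :
    |h δ| ≤ C * |δ| ^ (p + 1) / (p + 1) := by
  rcases le_total 0 δ with hδ | hδ
  · simpa [abs_of_nonneg hδ] using abs_le_of_abs_deriv_le_pow_of_nonneg h0 hd hb hδ
  · have hd_neg : ∀ u, HasDerivAt (fun u => h (-u)) (-h' (-u)) u := fun u => by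
      simpa [Function.comp_def] using (hd (-u)).scomp u (hasDerivAt_neg u)
    simpa [abs_of_nonpos hδ] using abs_le_of_abs_deriv_le_pow_of_nonneg (h := fun u => h (-u))
      (by simpa using h0) hd_neg (fun u => by simpa using hb (-u)) (neg_nonneg.2 hδ)

/-- The order-`q` Taylor polynomial of `g` at `s₀`, as a function of the increment `δ` (not of the
point `s₀ + δ`); it is the inner sum of `netT`. -/
def taylorSum (g : ℝ → ℝ) (s₀ : ℝ) (q : ℕ) (δ : ℝ) : ℝ :=
  ∑ j ∈ range (q + 1), iteratedDeriv j g s₀ / j ! * δ ^ j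

@[simp]
lemma taylorSum_zero (g : ℝ → ℝ) (s₀ δ : ℝ) : taylorSum g s₀ 0 δ = g s₀ := by
  simp [taylorSum]

@[simp]
lemma taylorSum_apply_zero (g : ℝ → ℝ) (s₀ : ℝ) (q : ℕ) : taylorSum g s₀ q 0 = g s₀ := by
  simp [taylorSum, sum_range_succ']

lemma hasDerivAt_taylorSum_succ (g : ℝ → ℝ) (s₀ : ℝ) (q : ℕ) (u : ℝ) :
    HasDerivAt (taylorSum g s₀ (q + 1)) (taylorSum (deriv g) s₀ q u) u := by
  have hterm : ∀ j : ℕ, HasDerivAt (fun u => iteratedDeriv j g s₀ / j ! * u ^ j)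
      (iteratedDeriv j g s₀ / j ! * (j * u ^ (j - 1))) u := fun j =>
    (hasDerivAt_pow j u).const_mul _
  have hsum := HasDerivAt.fun_sum (u := range (q + 2)) fun j _ => hterm j
  suffices taylorSum (deriv g) s₀ q u =
      ∑ j ∈ range (q + 2), iteratedDeriv j g s₀ / j ! * (j * u ^ (j - 1)) by
    rw [this]; exact hsum
  rw [sum_range_succ', taylorSum]
  simp only [CharP.cast_eq_zero, zero_mul, mul_zero, add_zero]
  refine sum_congr rfl fun j _ => ?_
  rw [iteratedDeriv_succ', Nat.factorial_succ, Nat.add_sub_cancel]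
  push_cast
  field_simp

/-- Induction on `q`: the remainder of `g` has the remainder of `deriv g` as derivative, and
integrating the bound `|u| ^ q` gains the factor `q + 1` of the factorial. -/
theorem abs_sub_taylorSum_le {L : ℝ} (q : ℕ) {g : ℝ → ℝ} (hg : ContDiff ℝ q g)
    (hlip : ∀ s t, |iteratedDeriv q g s - iteratedDeriv q g t| ≤ L * |s - t|) (s₀ δ : ℝ) :
    |g (s₀ + δ) - taylorSum g s₀ q δ| ≤ L * |δ| ^ (q + 1) / (q + 1)! := by
  induction q generalizing g δ with
  | zero => simpa using hlip (s₀ + δ) s₀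
  | succ q ih =>
    have hlip' : ∀ s t, |iteratedDeriv q (deriv g) s - iteratedDeriv q (deriv g) t|
        ≤ L * |s - t| := by
      simpa only [← iteratedDeriv_succ'] using hlip
    have hd : ∀ u, HasDerivAt (fun u => g (s₀ + u) - taylorSum g s₀ (q + 1) u)
        (deriv g (s₀ + u) - taylorSum (deriv g) s₀ q u) u := fun u =>
      (((hg.differentiable (by simp)) _).hasDerivAt.comp_const_add s₀ u).sub
        (hasDerivAt_taylorSum_succ g s₀ q u)
    have hb : ∀ u, |deriv g (s₀ + u) - taylorSum (deriv g) s₀ q u|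
        ≤ L / (q + 1)! * |u| ^ (q + 1) :=
      fun u => by simpa only [mul_div_right_comm] using ih hg.deriv' hlip' u
    calc |g (s₀ + δ) - taylorSum g s₀ (q + 1) δ|
        ≤ L / (q + 1)! * |δ| ^ (q + 1 + 1) / (q + 1 + 1) :=
          mod_cast abs_le_of_abs_deriv_le_pow (by simp) hd hb δ
      _ = L * |δ| ^ (q + 1 + 1) / (q + 1 + 1)! := by
          rw [Nat.factorial_succ (q + 1)]; push_cast; field_simp

lemma nonneg_of_abs_sub_le_mul_abs_sub {f : ℝ → ℝ} {L : ℝ}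
    (hlip : ∀ s t, |f s - f t| ≤ L * |s - t|) : 0 ≤ L :=
  (abs_nonneg _).trans (by simpa using hlip 1 0)

lemma abs_deriv_sub_taylorSum_inner_le {E : Type*} [NormedAddCommGroup E] [InnerProductSpace ℝ E]
    {σ : ℝ → ℝ} {L : ℝ} {q : ℕ} (hσ : ContDiff ℝ (q + 1) σ)
    (hlip : ∀ s t, |iteratedDeriv (q + 1) σ s - iteratedDeriv (q + 1) σ t| ≤ L * |s - t|)
    {x : E} (hx : ‖x‖ ≤ 1) (w w₀ : E) :
    |deriv σ ⟪w, x⟫ - taylorSum (deriv σ) ⟪w₀, x⟫ q ⟪w - w₀, x⟫|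
      ≤ L * ‖w - w₀‖ ^ (q + 1) / (q + 1)! := by
  have hL := nonneg_of_abs_sub_le_mul_abs_sub hlip
  have hδ : |⟪w - w₀, x⟫| ≤ ‖w - w₀‖ :=
    (abs_real_inner_le_norm _ _).trans (mul_le_of_le_one_right (norm_nonneg _) hx)
  have htaylor := abs_sub_taylorSum_le q hσ.deriv'
    (by simpa only [← iteratedDeriv_succ'] using hlip) ⟪w₀, x⟫ ⟪w - w₀, x⟫
  rw [inner_sub_left, add_sub_cancel, ← inner_sub_left] at htaylor
  exact htaylor.trans (by gcongr)

lemma hasGradientAt_sum_comp_inner {ι E : Type*} [Fintype ι] [NormedAddCommGroup E]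
    [InnerProductSpace ℝ E] [CompleteSpace E] {f : ι → ℝ → ℝ} {f' : ι → ℝ} {x : E}
    {W : PiLp 2 fun _ : ι => E} (h : ∀ r, HasDerivAt (f r) (f' r) ⟪W r, x⟫) :
    HasGradientAt (fun V : PiLp 2 (fun _ : ι => E) => ∑ r, f r ⟪V r, x⟫)
      (WithLp.toLp 2 fun r => f' r • x) W := by
  let ℓ : ι → (PiLp 2 (fun _ : ι => E) →L[ℝ] ℝ) := fun r =>
    (innerSL ℝ x).comp (PiLp.proj 2 (fun _ : ι => E) r)
  have hℓ : ∀ r V, ℓ r V = ⟪V r, x⟫ := fun r V => real_inner_comm _ _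
  have hF : HasFDerivAt (fun V => ∑ r, f r (ℓ r V)) (∑ r, f' r • ℓ r) W :=
    HasFDerivAt.fun_sum fun r _ => (hℓ r W ▸ h r).comp_hasFDerivAt W (ℓ r).hasFDerivAt
  simp only [hℓ] at hF
  rw [hasGradientAt_iff_hasFDerivAt]
  refine hF.congr_fderiv ?_
  ext V
  simp [PiLp.inner_apply, real_inner_smul_left, real_inner_comm, hℓ]

lemma norm_toLp_smul_sq {ι E : Type*} [Fintype ι] [NormedAddCommGroup E] (c : ι → ℝ)
    [NormedSpace ℝ E] (x : E) :
    ‖(WithLp.toLp 2 fun r => c r • x : PiLp 2 fun _ : ι => E)‖ ^ 2 = (∑ r, c r ^ 2) * ‖x‖ ^ 2 := by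
  simp [PiLp.norm_sq_eq_of_L2, norm_smul, mul_pow, sum_mul]

lemma sum_norm_pow_le_norm_pow {ι : Type*} [Fintype ι] {β : ι → Type*}
    [∀ i, NormedAddCommGroup (β i)] (v : PiLp 2 β) {p : ℕ} (hp : 2 ≤ p) :
    ∑ i, ‖v i‖ ^ p ≤ ‖v‖ ^ p := by
  obtain ⟨p, rfl⟩ := Nat.exists_eq_add_of_le' hp
  calc ∑ i, ‖v i‖ ^ (p + 2) = ∑ i, ‖v i‖ ^ p * ‖v i‖ ^ 2 := by simp only [pow_add]
    _ ≤ ∑ i, ‖v‖ ^ p * ‖v i‖ ^ 2 := by gcongr; exact PiLp.norm_apply_le v _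
    _ = ‖v‖ ^ (p + 2) := by rw [← mul_sum, ← PiLp.norm_sq_eq_of_L2, pow_add]

lemma Jrow_eq {d m n : ℕ} {σ : ℝ → ℝ} (hσ : Differentiable ℝ σ) (a : Fin m → ℝ)
    (X : Fin n → EuclideanSpace ℝ (Fin d)) (W : Wts d m) (i : Fin n) :
    Jrow d m n σ a X W i
      = WithLp.toLp 2 fun r => ((Real.sqrt m)⁻¹ * a r * deriv σ ⟪W r, X i⟫) • X i := by
  refine HasGradientAt.gradient ?_
  simp only [net, mul_sum, ← mul_assoc]
  exact hasGradientAt_sum_comp_inner fun r => ((hσ _).hasDerivAt.const_mul _)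

lemma JrowT_succ_eq (d m n q : ℕ) (σ : ℝ → ℝ) (a : Fin m → ℝ) (W₀ : Wts d m)
    (X : Fin n → EuclideanSpace ℝ (Fin d)) (W : Wts d m) (i : Fin n) :
    JrowT d m n (q + 1) σ a W₀ X W i = WithLp.toLp 2 fun r =>
      ((Real.sqrt m)⁻¹ * a r * taylorSum (deriv σ) ⟪W₀ r, X i⟫ q ⟪W r - W₀ r, X i⟫) • X i := by
  refine HasGradientAt.gradient ?_
  have hnetT : (fun V => netT d m (q + 1) σ a W₀ V (X i)) = fun V : Wts d m => ∑ r,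
      (Real.sqrt m)⁻¹ * a r * taylorSum σ ⟪W₀ r, X i⟫ (q + 1) (⟪V r, X i⟫ - ⟪W₀ r, X i⟫) := by
    simp only [netT, taylorSum, mul_sum, ← mul_assoc, inner_sub_left]
  simp only [hnetT, inner_sub_left]
  exact hasGradientAt_sum_comp_inner fun r =>
    ((hasDerivAt_taylorSum_succ σ _ q _).comp_sub_const _ _).const_mul _

lemma norm_Jrow_sub_JrowT_le {d m n q : ℕ} {σ : ℝ → ℝ} (hσ : ContDiff ℝ (q + 1) σ) {L : ℝ}
    (hlip : ∀ s t, |iteratedDeriv (q + 1) σ s - iteratedDeriv (q + 1) σ t| ≤ L * |s - t|)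
    {a : Fin m → ℝ} (ha : ∀ r, a r = 1 ∨ a r = -1) (W₀ : Wts d m)
    {X : Fin n → EuclideanSpace ℝ (Fin d)} (hX : ∀ i, ‖X i‖ = 1) (W : Wts d m) (i : Fin n) :
    ‖Jrow d m n σ a X W i - JrowT d m n (q + 1) σ a W₀ X W i‖
      ≤ L * ‖W - W₀‖ ^ (q + 1) / (q + 1)! * (Real.sqrt m)⁻¹ := by
  set D : Fin m → ℝ := fun r =>
    deriv σ ⟪W r, X i⟫ - taylorSum (deriv σ) ⟪W₀ r, X i⟫ q ⟪W r - W₀ r, X i⟫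
  have hdiff : Jrow d m n σ a X W i - JrowT d m n (q + 1) σ a W₀ X W i
      = WithLp.toLp 2 fun r => ((Real.sqrt m)⁻¹ * a r * D r) • X i := by
    rw [Jrow_eq (hσ.differentiable (by simp)), JrowT_succ_eq]
    ext r : 1
    simp only [PiLp.sub_apply, ← sub_smul, D, mul_sub]
  have hD : ∀ r, D r ^ 2 ≤ (L / (q + 1)!) ^ 2 * ‖(W - W₀) r‖ ^ (2 * (q + 1)) := fun r => by
    rw [pow_mul', ← mul_pow, ← sq_abs]
    gcongr
    simpa [mul_div_right_comm] using abs_deriv_sub_taylorSum_inner_le hσ hlip (hX i).le (W r) (W₀ r)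
  have hL := nonneg_of_abs_sub_le_mul_abs_sub hlip
  refine le_of_sq_le_sq ?_ (by positivity)
  calc _ = (Real.sqrt m)⁻¹ ^ 2 * ∑ r, D r ^ 2 := by
        rw [hdiff, norm_toLp_smul_sq, hX, one_pow, mul_one, mul_sum]
        refine sum_congr rfl fun r _ => ?_
        rcases ha r with h | h <;> simp [h, mul_pow]
    _ ≤ (Real.sqrt m)⁻¹ ^ 2 * ∑ r, (L / (q + 1)!) ^ 2 * ‖(W - W₀) r‖ ^ (2 * (q + 1)) := by
        gcongr with r; exact hD r
    _ ≤ (Real.sqrt m)⁻¹ ^ 2 * ((L / (q + 1)!) ^ 2 * ‖W - W₀‖ ^ (2 * (q + 1))) := by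
        rw [← mul_sum]
        gcongr
        exact sum_norm_pow_le_norm_pow _ (by omega)
    _ = _ := by ring

theorem jacobian_difference_on_ball_general
    (d m n k : ℕ) (hk : 1 ≤ k) (σ : ℝ → ℝ) (hσ : ContDiff ℝ k σ)
    (L : ℝ) (hlip : ∀ s t : ℝ, |iteratedDeriv k σ s - iteratedDeriv k σ t| ≤ L * |s - t|)
    (a : Fin m → ℝ) (ha : ∀ r, a r = 1 ∨ a r = -1)
    (W₀ : Wts d m) (X : Fin n → EuclideanSpace ℝ (Fin d)) (hX : ∀ i, ‖X i‖ = 1)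
    (C₀ : ℝ) (W : Wts d m) (hball : ‖W - W₀‖ ≤ C₀) :
    Real.sqrt (∑ i, ‖Jrow d m n σ a X W i - JrowT d m n k σ a W₀ X W i‖ ^ 2)
      ≤ L * Real.sqrt n / (k.factorial : ℝ) * C₀ ^ k * (Real.sqrt m)⁻¹ := by
  obtain ⟨q, rfl⟩ : ∃ q, k = q + 1 := ⟨k - 1, by omega⟩
  have hL := nonneg_of_abs_sub_le_mul_abs_sub hlip
  have hC₀ : 0 ≤ C₀ := (norm_nonneg _).trans hball
  have hrow : ∀ i, ‖Jrow d m n σ a X W i - JrowT d m n (q + 1) σ a W₀ X W i‖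
      ≤ L * C₀ ^ (q + 1) / (q + 1)! * (Real.sqrt m)⁻¹ := fun i =>
    (norm_Jrow_sub_JrowT_le hσ hlip ha W₀ hX W i).trans (by gcongr)
  calc _ ≤ Real.sqrt (n * (L * C₀ ^ (q + 1) / (q + 1)! * (Real.sqrt m)⁻¹) ^ 2) := by
        gcongr
        exact (sum_le_sum fun i _ => pow_le_pow_left₀ (norm_nonneg _) (hrow i) 2).trans_eq (by simp)
    _ = _ := by
        rw [Real.sqrt_mul (Nat.cast_nonneg n), Real.sqrt_sq (by positivity)]
        ring

/-- Jacobian-difference bound on a Frobenius ball (boundedness part of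
Lemma A.2(a)). -/
theorem jacobian_difference_on_ball
    (d m n k : ℕ) (hm : 1 ≤ m) (hk : 1 ≤ k) (σ : ℝ → ℝ) (hσ : ContDiff ℝ k σ)
    (L : ℝ) (hlip : ∀ s t : ℝ, |iteratedDeriv k σ s - iteratedDeriv k σ t| ≤ L * |s - t|)
    (a : Fin m → ℝ) (ha : ∀ r, a r = 1 ∨ a r = -1)
    (W₀ : Wts d m) (X : Fin n → EuclideanSpace ℝ (Fin d)) (hX : ∀ i, ‖X i‖ = 1)
    (C₀ : ℝ) (hC₀ : 0 < C₀) (W : Wts d m) (hball : ‖W - W₀‖ ≤ C₀) :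
    Real.sqrt (∑ i, ‖Jrow d m n σ a X W i - JrowT d m n k σ a W₀ X W i‖ ^ 2)
      ≤ L * Real.sqrt n / (k.factorial : ℝ) * C₀ ^ k * (Real.sqrt m)⁻¹ :=
  jacobian_difference_on_ball_general d m n k hk σ hσ L hlip a ha W₀ X hX C₀ W hball
end
end

section
/- Per-neuron weight movement bound (first part of Lemma A.3, full-training case): Assume |σ'(t)| ≤ C₁ for all t and ‖x_i‖ = 1 for all i. Let W_t be a solution of the full-training gradient flow and suppose there are R₀, c > 0 such that ‖g_t‖ ≤ R₀ e^{−ct} for all t ≥ 0. Then for every neuron r ∈ {1, …, m} and every t ≥ 0: ‖w_{r,t} − w_{r,0}‖ ≤ (η₀ C₁ √n R₀ / c)(1 − e^{−ct}) · m^{−1/2}. -/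
/-! The `r`-th block of `∇L(W)` is `m^{-1/2} a_r ∑ᵢ gᵢ σ'(⟨w_r, xᵢ⟩) xᵢ`, whose norm is at most
`m^{-1/2} C₁ ∑ᵢ |gᵢ| ≤ m^{-1/2} C₁ √n ‖g‖`. Along the flow the neuron `w_r` therefore moves with
speed at most `η₀ C₁ √n R₀ e^{-cs} / √m`, and integrating this speed bound over `[0, t]`
gives the claim. -/

open scoped BigOperators RealInnerProductSpace
noncomputable section

open Real Set

theorem hasGradientAt_half_sum_sq_sub {F ι : Type*} [NormedAddCommGroup F]
    [InnerProductSpace ℝ F] [CompleteSpace F] (s : Finset ι) {f : ι → F → ℝ} {f' : ι → F}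
    (y : ι → ℝ) {x : F} (hf : ∀ i ∈ s, HasGradientAt (f i) (f' i) x) :
    HasGradientAt (fun x => 1 / 2 * ∑ i ∈ s, (f i x - y i) ^ 2)
      (∑ i ∈ s, (f i x - y i) • f' i) x := by
  simp only [hasGradientAt_iff_hasFDerivAt] at hf ⊢
  refine ((HasFDerivAt.fun_sum fun i hi =>
    ((hf i hi).sub_const (y i)).pow 2).const_mul (1 / 2)).congr_fderiv ?_
  rw [map_sum, Finset.smul_sum]
  refine Finset.sum_congr rfl fun i _ => ?_
  rw [map_smulₛₗ, smul_smul]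
  congr 1
  simp

theorem EuclideanSpace.sum_abs_le_sqrt_card_mul_norm {ι : Type*} [Fintype ι]
    (g : EuclideanSpace ℝ ι) : ∑ i, |g i| ≤ √(Fintype.card ι) * ‖g‖ := by
  calc ∑ i, |g i| = √((∑ i, |g i|) ^ 2) := (sqrt_sq (by positivity)).symm
    _ ≤ √(Fintype.card ι * ∑ i, |g i| ^ 2) := sqrt_le_sqrt sq_sum_le_card_mul_sum_sq
    _ = √(Fintype.card ι) * ‖g‖ := by
      rw [sqrt_mul (Nat.cast_nonneg _), EuclideanSpace.norm_eq]
      simp only [Real.norm_eq_abs]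

theorem norm_sub_le_of_norm_deriv_le_exp {E : Type*} [NormedAddCommGroup E] [NormedSpace ℝ E]
    {f f' : ℝ → E} {K c t : ℝ} (hc : c ≠ 0) (ht : 0 ≤ t)
    (hf : ∀ s ∈ Icc 0 t, HasDerivAt f (f' s) s)
    (bound : ∀ s ∈ Ico 0 t, ‖f' s‖ ≤ K * exp (-(c * s))) :
    ‖f t - f 0‖ ≤ K / c * (1 - exp (-(c * t))) := by
  have hB : ∀ s, HasDerivAt (fun s => K / c * (1 - exp (-(c * s)))) (K * exp (-(c * s))) s :=
    fun s => (((hasDerivAt_id' s).const_mul c).fun_neg.exp.const_sub 1).const_mul (K / c)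
      |>.congr_deriv (by field_simp)
  refine image_norm_le_of_norm_deriv_right_le_deriv_boundary
    (fun s hs => (hf s hs).continuousAt.continuousWithinAt.sub continuousWithinAt_const)
    (fun s hs => ((hf s (Ico_subset_Icc_self hs)).sub_const (f 0)).hasDerivWithinAt)
    (by simp) hB bound (right_mem_Icc.2 ht)

section TwoLayerNet

variable {d m n : ℕ} {σ : ℝ → ℝ} {a : Fin m → ℝ}

def gradNet (σ : ℝ → ℝ) (a : Fin m → ℝ) (V : Wts d m) (x : EuclideanSpace ℝ (Fin d)) :
    Wts d m :=
  WithLp.toLp 2 fun r => ((√m)⁻¹ * a r * deriv σ ⟪V r, x⟫) • x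

theorem hasGradientAt_net (hσ : Differentiable ℝ σ) (V : Wts d m) (x : EuclideanSpace ℝ (Fin d)) :
    HasGradientAt (fun V => net d m σ a V x) (gradNet σ a V x) V := by
  have hinner : ∀ r, HasFDerivAt (fun V : Wts d m => ⟪V r, x⟫)
      ((innerSL ℝ x).comp (PiLp.proj 2 _ r)) V := fun r => by
    convert ((innerSL ℝ x).comp (PiLp.proj 2 _ r)).hasFDerivAt (x := V) using 1
    funext V
    simp [real_inner_comm]
  rw [hasGradientAt_iff_hasFDerivAt]
  refine (HasFDerivAt.fun_sum fun r _ =>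
    (((hσ _).hasDerivAt.comp_hasFDerivAt V (hinner r)).const_mul (a r))).const_mul (√m)⁻¹
    |>.congr_fderiv ?_
  ext v
  simp only [smul_apply, sum_apply, ContinuousLinearMap.comp_apply, PiLp.proj_apply,
    coe_innerSL_apply, smul_eq_mul, InnerProductSpace.toDual_apply_apply, Finset.mul_sum]
  rw [gradNet, PiLp.inner_apply]
  refine Finset.sum_congr rfl fun r _ => ?_
  rw [real_inner_smul_left, real_inner_comm]
  ring

theorem norm_gradNet_apply_le {C₁ : ℝ} (hbd : ∀ t, |deriv σ t| ≤ C₁) {r : Fin m} (ha : |a r| ≤ 1)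
    (V : Wts d m) (x : EuclideanSpace ℝ (Fin d)) :
    ‖gradNet σ a V x r‖ ≤ (√m)⁻¹ * C₁ * ‖x‖ := by
  have hC₁ : 0 ≤ C₁ := (abs_nonneg _).trans (hbd 0)
  simp only [gradNet, PiLp.toLp_apply, norm_smul, norm_mul, Real.norm_eq_abs,
    abs_inv, abs_of_nonneg (sqrt_nonneg _)]
  rw [mul_assoc (√m)⁻¹]
  gcongr
  exact (mul_le_of_le_one_left (abs_nonneg _) ha).trans (hbd _)

theorem hasGradientAt_loss (hσ : Differentiable ℝ σ) (X : Fin n → EuclideanSpace ℝ (Fin d))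
    (y : EuclideanSpace ℝ (Fin n)) (V : Wts d m) :
    HasGradientAt (loss d m n σ a X y)
      (∑ i, resid d m n σ a X y V i • gradNet σ a V (X i)) V := by
  have hloss : loss d m n σ a X y = fun V => 1 / 2 * ∑ i, (net d m σ a V (X i) - y i) ^ 2 := by
    funext V
    simp [loss, resid, EuclideanSpace.norm_sq_eq]
  rw [hloss]
  exact hasGradientAt_half_sum_sq_sub _ _ fun i _ => hasGradientAt_net hσ V (X i)

theorem norm_gradient_loss_apply_le (hσ : Differentiable ℝ σ) {C₁ : ℝ}
    (hbd : ∀ t, |deriv σ t| ≤ C₁) {r : Fin m} (ha : |a r| ≤ 1)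
    {X : Fin n → EuclideanSpace ℝ (Fin d)} (hX : ∀ i, ‖X i‖ ≤ 1) (y : EuclideanSpace ℝ (Fin n))
    (V : Wts d m) :
    ‖gradient (loss d m n σ a X y) V r‖ ≤ (√m)⁻¹ * C₁ * (√n * ‖resid d m n σ a X y V‖) := by
  have hC₁ : 0 ≤ C₁ := (abs_nonneg _).trans (hbd 0)
  set g := resid d m n σ a X y V
  rw [(hasGradientAt_loss hσ X y V).gradient]
  calc ‖(∑ i, g i • gradNet σ a V (X i)) r‖ = ‖∑ i, g i • gradNet σ a V (X i) r‖ := by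
        simp
    _ ≤ ∑ i, |g i| * ((√m)⁻¹ * C₁) := by
        refine norm_sum_le_of_le _ fun i _ => ?_
        rw [norm_smul, Real.norm_eq_abs]
        gcongr
        exact (norm_gradNet_apply_le hbd ha V (X i)).trans
          (mul_le_of_le_one_right (by positivity) (hX i))
    _ = (√m)⁻¹ * C₁ * ∑ i, |g i| := by rw [← Finset.sum_mul, mul_comm]
    _ ≤ (√m)⁻¹ * C₁ * (√n * ‖g‖) := by
        gcongr
        simpa using EuclideanSpace.sum_abs_le_sqrt_card_mul_norm g

end TwoLayerNet

set_option synthInstance.maxHeartbeats 400000 in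
set_option maxHeartbeats 2000000 in
theorem per_neuron_movement_general
    (d m n : ℕ) (σ : ℝ → ℝ) (hσ : ContDiff ℝ 1 σ)
    (C₁ : ℝ) (hbd : ∀ t : ℝ, |deriv σ t| ≤ C₁)
    (a : Fin m → ℝ) (ha : ∀ r, a r = 1 ∨ a r = -1)
    (X : Fin n → EuclideanSpace ℝ (Fin d)) (hX : ∀ i, ‖X i‖ = 1)
    (y : EuclideanSpace ℝ (Fin n)) (W₀ : Wts d m)
    (η₀ R₀ c : ℝ) (hη₀ : 0 < η₀) (hc : 0 < c)
    (W : ℝ → Wts d m) (hW0 : W 0 = W₀)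
    (hflow : ∀ t : ℝ, HasDerivAt W (-(η₀ • gradient (loss d m n σ a X y) (W t))) t)
    (hg : ∀ t : ℝ, 0 ≤ t → ‖resid d m n σ a X y (W t)‖ ≤ R₀ * Real.exp (-(c * t))) :
    ∀ (r : Fin m) (t : ℝ), 0 ≤ t →
      ‖W t r - W₀ r‖
        ≤ η₀ * C₁ * Real.sqrt n * R₀ / c * (1 - Real.exp (-(c * t))) * (Real.sqrt m)⁻¹ := by
  intro r t ht
  have hC₁ : 0 ≤ C₁ := (abs_nonneg _).trans (hbd 0)
  have ha_r : |a r| ≤ 1 := by rcases ha r with h | h <;> simp [h]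
  have hderiv : ∀ s,
      HasDerivAt (fun s => W s r) ((-(η₀ • gradient (loss d m n σ a X y) (W s))) r) s := fun s =>
    (PiLp.proj 2 (fun _ : Fin m => EuclideanSpace ℝ (Fin d)) r).hasFDerivAt.comp_hasDerivAt s
      (hflow s)
  have hspeed : ∀ s ∈ Ico 0 t, ‖(-(η₀ • gradient (loss d m n σ a X y) (W s))) r‖
      ≤ η₀ * ((√m)⁻¹ * C₁ * (√n * R₀)) * exp (-(c * s)) := fun s hs => calc
    _ = η₀ * ‖gradient (loss d m n σ a X y) (W s) r‖ := by simp [norm_smul, hη₀.le]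
    _ ≤ η₀ * ((√m)⁻¹ * C₁ * (√n * ‖resid d m n σ a X y (W s)‖)) := by
        gcongr
        exact norm_gradient_loss_apply_le (hσ.differentiable one_ne_zero) hbd ha_r
          (fun i => (hX i).le) y (W s)
    _ ≤ η₀ * ((√m)⁻¹ * C₁ * (√n * (R₀ * exp (-(c * s))))) := by gcongr; exact hg s hs.1
    _ = _ := by ring
  have hmove := norm_sub_le_of_norm_deriv_le_exp hc.ne' ht (fun s _ => hderiv s) hspeed
  rw [hW0] at hmove
  exact hmove.trans_eq (by ring)

set_option synthInstance.maxHeartbeats 400000 in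
set_option maxHeartbeats 2000000 in
/-- per-neuron weight movement bound (first part of Lemma A.3,
full-training case). -/
theorem per_neuron_movement
    (d m n : ℕ) (hm : 1 ≤ m) (σ : ℝ → ℝ) (hσ : ContDiff ℝ 1 σ)
    (C₁ : ℝ) (hbd : ∀ t : ℝ, |deriv σ t| ≤ C₁)
    (a : Fin m → ℝ) (ha : ∀ r, a r = 1 ∨ a r = -1)
    (X : Fin n → EuclideanSpace ℝ (Fin d)) (hX : ∀ i, ‖X i‖ = 1)
    (y : EuclideanSpace ℝ (Fin n)) (W₀ : Wts d m)
    (η₀ R₀ c : ℝ) (hη₀ : 0 < η₀) (hR₀ : 0 < R₀) (hc : 0 < c)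
    (W : ℝ → Wts d m) (hW0 : W 0 = W₀)
    (hflow : ∀ t : ℝ, HasDerivAt W (-(η₀ • gradient (loss d m n σ a X y) (W t))) t)
    (hg : ∀ t : ℝ, 0 ≤ t → ‖resid d m n σ a X y (W t)‖ ≤ R₀ * Real.exp (-(c * t))) :
    ∀ (r : Fin m) (t : ℝ), 0 ≤ t →
      ‖W t r - W₀ r‖
        ≤ η₀ * C₁ * Real.sqrt n * R₀ / c * (1 - Real.exp (-(c * t))) * (Real.sqrt m)⁻¹ :=
  per_neuron_movement_general d m n σ hσ C₁ hbd a ha X hX y W₀ η₀ R₀ c hη₀ hc W hW0 hflow hg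
end
end
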